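/- arXiv:1805.11421 — 5 statements merged into one kernel-verified Lean document; each statement's English description precedes it below -/
import Mathlib

section
/- Let r_1, r_2 ≥ 2 be integers, and suppose that for i = 1, 2 the bound χ(KG^{r_i}(n,k,s)) ≥ ⌈(n - r_i(k-s-1))/(r_i-1)⌉ holds for all integers n, k, s with n ≥ r_i(k-1)+1 and k > s ≥ 0. Then for all n ≥ r_1 r_2 (k-1)+1 and k > s ≥ 0, χ(KG^{r_1 r_2}(n,k,s)) ≥ ⌈(n - r_1 r_2 (k-s-1))/(r_1 r_2 - 1)⌉. -/
/-- `E` is an edge of the generalized Kneser hypergraph `KG^r(n,k,s)`. -/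
def KGEdge (r n k s : ℕ) (E : Finset (Finset (Fin n))) : Prop :=
  E.card = r ∧ (∀ A ∈ E, A.card = k) ∧
    ∀ A ∈ E, ∀ B ∈ E, A ≠ B → (A ∩ B).card ≤ s

/-- `c` is a proper coloring of `KG^r(n,k,s)` with `C` colors. -/
def KGProper (r n k s C : ℕ) (c : Finset (Fin n) → Fin C) : Prop :=
  ∀ E : Finset (Finset (Fin n)), KGEdge r n k s E → ¬ ∃ i : Fin C, ∀ A ∈ E, c A = i

/-- The bound `χ(KG^r(n,k,s)) ≥ ⌈(n - r(k-s-1))/(r-1)⌉` holds for `r`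
(for all admissible `n, k, s`). -/
def KGBound (r : ℕ) : Prop :=
  ∀ n k s : ℕ, r * (k - 1) + 1 ≤ n → s < k →
    ∀ C : ℕ, ∀ c : Finset (Fin n) → Fin C, KGProper r n k s C c →
      ⌈((n : ℚ) - (r : ℚ) * ((k : ℚ) - (s : ℚ) - 1)) / ((r : ℚ) - 1)⌉ ≤ (C : ℤ)

/-!
In the integral form `n ≤ C (r - 1) + r (k - s - 1)` of the bound, suppose a proper `C`-colouring
of `KG^{pq}(n,k,s)` violates it. This leaves room for an intermediate size `K`, large enough that
the bound for `q` forces every `K`-set `Y` to contain a monochromatic edge of `KG^q(n,k,s)`, yet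
small enough that `KG^p(n,K,s)` violates the bound for `p` with `C` colours. Colour `Y` by the
colour of such an edge. The union of the `q`-edges inside the members of a monochromatic edge of
`KG^p(n,K,s)` would be a monochromatic edge of `KG^{pq}(n,k,s)`, so this colouring is proper,
contradicting the bound for `p`.
-/

open Finset

theorem kgCeil_le_iff {r n k s C : ℕ} (hr : 1 < r) (hs : s < k) :
    ⌈((n : ℚ) - (r : ℚ) * ((k : ℚ) - (s : ℚ) - 1)) / ((r : ℚ) - 1)⌉ ≤ (C : ℤ) ↔
      n ≤ C * (r - 1) + r * (k - s - 1) := by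
  have hr' : (1 : ℚ) < r := by exact_mod_cast hr
  have hcast : ((C * (r - 1) + r * (k - s - 1) : ℕ) : ℚ) = C * (r - 1) + r * (k - s - 1) := by
    push_cast [Nat.cast_sub hr.le, Nat.cast_sub (Nat.succ_le_of_lt (Nat.sub_pos_of_lt hs)),
      Nat.cast_sub hs.le]
    ring
  rw [Int.ceil_le, div_le_iff₀ (by linarith), ← Nat.cast_le (α := ℚ), hcast]
  push_cast
  constructor <;> intro h <;> linarith

theorem kgBound_iff {r : ℕ} (hr : 1 < r) :
    KGBound r ↔ ∀ n k s : ℕ, r * (k - 1) + 1 ≤ n → s < k →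
      ∀ C : ℕ, ∀ c : Finset (Fin n) → Fin C, KGProper r n k s C c →
        n ≤ C * (r - 1) + r * (k - s - 1) := by
  refine forall₄_congr fun n k s _ => forall_congr' fun hs => ?_
  simp only [kgCeil_le_iff hr hs]

theorem KGEdge.map {r m n k s : ℕ} (f : Fin m ↪ Fin n) {E : Finset (Finset (Fin m))}
    (hE : KGEdge r m k s E) : KGEdge r n k s (E.map (mapEmbedding f).toEmbedding) := by
  obtain ⟨hcard, hk, hs⟩ := hE
  refine ⟨by simp [hcard], ?_, ?_⟩
  · simpa using hk
  · simp only [mem_map, RelEmbedding.coe_toEmbedding, mapEmbedding_apply]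
    rintro _ ⟨A, hA, rfl⟩ _ ⟨B, hB, rfl⟩ hAB
    rw [← map_inter, card_map]
    exact hs A hA B hB (ne_of_apply_ne _ hAB)

theorem KGEdge.biUnion {p q n K k s : ℕ} (hs : s < k) {E : Finset (Finset (Fin n))}
    (hE : KGEdge p n K s E) {F : Finset (Fin n) → Finset (Finset (Fin n))}
    (hF : ∀ Y ∈ E, KGEdge q n k s (F Y)) (hFY : ∀ Y ∈ E, ∀ A ∈ F Y, A ⊆ Y) :
    KGEdge (p * q) n k s (E.biUnion F) := by
  obtain ⟨hcard, -, hinter⟩ := hE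
  have hsmall : ∀ Y ∈ E, ∀ Y' ∈ E, Y ≠ Y' → ∀ A ∈ F Y, ∀ B ∈ F Y', (A ∩ B).card ≤ s :=
    fun Y hY Y' hY' hne A hA B hB =>
      (card_le_card (inter_subset_inter (hFY Y hY A hA) (hFY Y' hY' B hB))).trans
        (hinter Y hY Y' hY' hne)
  refine ⟨?_, ?_, ?_⟩
  · -- the pieces are disjoint: a common `k`-set would lie in two `Y`s meeting in `≤ s < k` points
    rw [card_biUnion, sum_const_nat fun Y hY => (hF Y hY).1, hcard]
    intro Y hY Y' hY' hne
    refine disjoint_left.2 fun A hA hA' => ?_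
    have := hsmall Y hY Y' hY' hne A hA A hA'
    rw [inter_self, (hF Y hY).2.1 A hA] at this
    omega
  · simp only [mem_biUnion]
    rintro A ⟨Y, hY, hA⟩
    exact (hF Y hY).2.1 A hA
  · simp only [mem_biUnion]
    rintro A ⟨Y, hY, hA⟩ B ⟨Y', hY', hB⟩ hAB
    by_cases hYY : Y = Y'
    · subst hYY
      exact (hF Y hY).2.2 A hA B hB hAB
    · exact hsmall Y hY Y' hY' hYY A hA B hB

theorem exists_monochromatic_kgEdge_subset {q n k s C : ℕ} (hq : 1 < q) (hbq : KGBound q)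
    (hs : s < k) (c : Finset (Fin n) → Fin C) {Y : Finset (Fin n)}
    (hY : q * (k - 1) + 1 ≤ Y.card) (hYC : C * (q - 1) + q * (k - s - 1) < Y.card) :
    ∃ F i, KGEdge q n k s F ∧ (∀ A ∈ F, A ⊆ Y) ∧ ∀ A ∈ F, c A = i := by
  let f := (Y.orderEmbOfFin rfl).toEmbedding
  have hnot : ¬ KGProper q Y.card k s C fun A => c (A.map f) := fun hc =>
    hYC.not_ge ((kgBound_iff hq).1 hbq _ k s hY hs C _ hc)
  simp only [KGProper, not_forall, not_not] at hnot
  obtain ⟨E, hE, i, hi⟩ := hnot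
  refine ⟨E.map (mapEmbedding f).toEmbedding, i, hE.map f, ?_, ?_⟩ <;>
    simp only [mem_map, RelEmbedding.coe_toEmbedding, mapEmbedding_apply] <;>
    rintro _ ⟨A, hA, rfl⟩
  · intro y hy
    obtain ⟨x, -, rfl⟩ := mem_map.1 hy
    exact Y.orderEmbOfFin_mem rfl x
  · exact hi A hA

theorem le_of_kgProper_mul {p q n k s K C : ℕ} (hp : 1 < p) (hq : 1 < q) (hbp : KGBound p)
    (hbq : KGBound q) (hs : s < k) (hqK : q * (k - 1) + 1 ≤ K)
    (hCK : C * (q - 1) + q * (k - s - 1) < K) (hnK : p * (K - 1) + 1 ≤ n)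
    (c : Finset (Fin n) → Fin C) (hc : KGProper (p * q) n k s C c) :
    n ≤ C * (p - 1) + p * (K - s - 1) := by
  have : Nonempty (Fin C) := ⟨c ∅⟩
  choose! F col hF hFY hFc using fun (Y : Finset (Fin n)) (hY : Y.card = K) =>
    exists_monochromatic_kgEdge_subset hq hbq hs c (hY ▸ hqK) (hY ▸ hCK)
  have hcol : KGProper p n K s C col := by
    rintro E hE ⟨i, hi⟩
    have hEK := hE.2.1
    refine hc _ (hE.biUnion hs (fun Y hY => hF Y (hEK Y hY)) fun Y hY => hFY Y (hEK Y hY)) ⟨i, ?_⟩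
    simp only [mem_biUnion]
    rintro A ⟨Y, hY, hA⟩
    rw [hFc Y (hEK Y hY) A hA, hi Y hY]
  have hkK : k ≤ K := by
    have := Nat.le_mul_of_pos_left (k - 1) (zero_lt_one.trans hq)
    omega
  exact (kgBound_iff hp).1 hbp n K s hnK (hs.trans_le hkK) C col hcol

theorem exists_intermediate_size {p q n k s C : ℕ} (hp : 1 ≤ p) (hq : 1 ≤ q) (hs : s < k)
    (hn : p * q * (k - 1) + 1 ≤ n) (hC : C * (p * q - 1) + p * q * (k - s - 1) < n) :
    ∃ K, q * (k - 1) + 1 ≤ K ∧ C * (q - 1) + q * (k - s - 1) < K ∧ p * (K - 1) + 1 ≤ n ∧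
      C * (p - 1) + p * (K - s - 1) < n := by
  obtain ⟨a, rfl⟩ : ∃ a, k = a + s + 1 := ⟨k - s - 1, by omega⟩
  simp only [show a + s + 1 - 1 = a + s by omega, show a + s + 1 - s - 1 = a by omega] at hn hC ⊢
  obtain ⟨M, hqM, hCM, hM⟩ : ∃ M, q * (a + s) ≤ M ∧ C * (q - 1) + q * a ≤ M ∧
      (M = q * (a + s) ∨ M = C * (q - 1) + q * a) :=
    ⟨_, le_max_left _ _, le_max_right _ _, max_choice _ _⟩
  refine ⟨M + 1, by omega, by omega, ?_⟩
  have hsM : s ≤ M := le_trans (by nlinarith) hqM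
  have hpq : 1 ≤ p * q := one_le_mul hp hq
  simp only [Nat.add_sub_cancel, show M + 1 - s - 1 = M - s by omega]
  zify [hp, hq, hpq, hsM] at hn hC hqM hCM hM ⊢
  -- for `M = q (k - 1)` the key estimate is `C (p - 1) + p (q - 1) s ≤ max (C (p q - 1)) (p q s)`
  rcases hM with hM | hM <;> rw [hM] at hCM ⊢ <;> constructor <;> nlinarith

/-- Reduction lemma: if the lower bound holds for `r₁` and for `r₂`
(with `r₁, r₂ ≥ 2`), then it holds for `r₁ * r₂`. -/
theorem kneser_bound_mul (r₁ r₂ : ℕ) (h1 : 2 ≤ r₁) (h2 : 2 ≤ r₂)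
    (hb1 : KGBound r₁) (hb2 : KGBound r₂) : KGBound (r₁ * r₂) := by
  rw [kgBound_iff (by nlinarith)]
  intro n k s hn hs C c hc
  by_contra! hC
  obtain ⟨K, hqK, hCK, hnK, hK⟩ :=
    exists_intermediate_size (one_le_two.trans h1) (one_le_two.trans h2) hs hn hC
  exact hK.not_ge (le_of_kgProper_mul h1 h2 hb1 hb2 hs hqK hCK hnK c hc)
end

section
/- For integers n ≥ rk with r ≥ 2, k ≥ 1, the hypergraph KG^r(n,k,0) admits a proper coloring with ⌈(n - r(k-1))/(r-1)⌉ colors; hence χ(KG^r(n,k,0)) = ⌈(n - r(k-1))/(r-1)⌉ (given the Alon–Frankl–Lovász lower bound). -/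
lemma arith_main (n r k N : ℕ) (hr : 2 ≤ r) (hk : 1 ≤ k) (hn : r * k ≤ n)
    (hN : N = (n - r * (k - 1) + (r - 2)) / (r - 1)) :
    1 ≤ N ∧ n - (N - 1) * (r - 1) < r * k := by
  have hab : r * (k - 1) + r = r * k := by
    conv_rhs => rw [show k = (k - 1) + 1 from by omega]
    ring
  obtain ⟨b, hb⟩ : ∃ b, r * k = b := ⟨_, rfl⟩
  obtain ⟨a, ha⟩ : ∃ a, r * (k - 1) = a := ⟨_, rfl⟩
  rw [hb] at hn
  rw [ha, hb] at hab
  rw [ha] at hN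
  rw [hb]
  have h1 : 1 ≤ N := by
    rw [hN, Nat.one_le_div_iff (by omega)]
    omega
  have hlt : n - a - 1 < N * (r - 1) := by
    rw [← Nat.div_lt_iff_lt_mul (by omega : 0 < r - 1)]
    rw [hN, show n - a + (r - 2) = (n - a - 1) + (r - 1) * 1 from by omega,
      Nat.add_mul_div_left _ _ (by omega : 0 < r - 1)]
    omega
  have hprod : (N - 1) * (r - 1) + (r - 1) = N * (r - 1) := by
    conv_rhs => rw [show N = (N - 1) + 1 from by omega]
    ring
  obtain ⟨q, hq⟩ : ∃ q, (N - 1) * (r - 1) = q := ⟨_, rfl⟩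
  obtain ⟨p, hp⟩ : ∃ p, N * (r - 1) = p := ⟨_, rfl⟩
  rw [hq, hp] at hprod
  rw [hp] at hlt
  rw [hq]
  exact ⟨h1, by omega⟩

lemma card_filter_ge (n t : ℕ) :
    (Finset.univ.filter fun x : Fin n => t ≤ (x : ℕ)).card = n - t := by
  have himg : (Finset.univ.filter fun x : Fin n => t ≤ (x : ℕ)).image Fin.val
      = Finset.Ico t n := by
    ext m
    simp only [Finset.mem_image, Finset.mem_filter, Finset.mem_univ, true_and,
      Finset.mem_Ico]
    constructor
    · rintro ⟨x, hx, rfl⟩; exact ⟨hx, x.isLt⟩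
    · rintro ⟨h1, h2⟩; exact ⟨⟨m, h2⟩, h1, rfl⟩
  have hinj := Finset.card_image_of_injective
    (Finset.univ.filter fun x : Fin n => t ≤ (x : ℕ)) Fin.val_injective
  rw [himg, Nat.card_Ico] at hinj
  omega

/-- `KG^r(n,k,0)` admits a proper coloring with `⌈(n - r(k-1))/(r-1)⌉` colors
(written `(n - r*(k-1) + (r-2))/(r-1)` in `ℕ`); hence, given the Alon–Frankl–Lovász
lower bound, its chromatic number equals this value. -/
theorem kneser_hypergraph_upper_bound_and_chromatic (n k r : ℕ)
    (hr : 2 ≤ r) (hk : 1 ≤ k) (hn : r * k ≤ n) :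
    (∃ c : Finset (Fin n) → Fin ((n - r * (k - 1) + (r - 2)) / (r - 1)),
        KGProper r n k 0 _ c) ∧
    ((∀ C : ℕ, ∀ c : Finset (Fin n) → Fin C, KGProper r n k 0 C c →
        (n - r * (k - 1) + (r - 2)) / (r - 1) ≤ C) →
      IsLeast {C : ℕ | ∃ c : Finset (Fin n) → Fin C, KGProper r n k 0 C c}
        ((n - r * (k - 1) + (r - 2)) / (r - 1))) := by
  set N := (n - r * (k - 1) + (r - 2)) / (r - 1) with hNdef
  obtain ⟨hN1, hNlt⟩ := arith_main n r k N hr hk hn hNdef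
  have hr1 : 0 < r - 1 := by omega
  -- the minimum-value function
  set f : Finset (Fin n) → ℕ :=
    fun A => if h : A.Nonempty then ((A.min' h : Fin n) : ℕ) else 0 with hfdef
  -- the coloring
  set c : Finset (Fin n) → Fin N :=
    fun A => ⟨min (f A / (r - 1)) (N - 1), by omega⟩ with hcdef
  have hproper : KGProper r n k 0 N c := by
    intro E hE ⟨i, hi⟩
    obtain ⟨hEcard, hAcard, hint⟩ := hE
    -- each member is nonempty
    have hne : ∀ A ∈ E, A.Nonempty := fun A hA =>
      Finset.card_pos.mp (by rw [hAcard A hA]; omega)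
    -- pairwise disjoint
    have hdisj : ∀ A ∈ E, ∀ B ∈ E, A ≠ B → Disjoint A B := by
      intro A hA B hB hAB
      rw [Finset.disjoint_iff_inter_eq_empty, ← Finset.card_eq_zero]
      have := hint A hA B hB hAB
      omega
    -- color value facts
    have hcol : ∀ A ∈ E, min (f A / (r - 1)) (N - 1) = (i : ℕ) := by
      intro A hA
      have := hi A hA
      exact congrArg Fin.val this
    -- f is injective on E
    have hfinj : Set.InjOn f E := by
      intro A hA B hB hfAB
      by_contra hAB
      have hAne := hne A hA
      have hBne := hne B hB
      have hfA : f A = ((A.min' hAne : Fin n) : ℕ) := by simp [hfdef, hAne]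
      have hfB : f B = ((B.min' hBne : Fin n) : ℕ) := by simp [hfdef, hBne]
      have hxy : A.min' hAne = B.min' hBne := Fin.val_injective (by omega)
      have hmem : A.min' hAne ∈ A ∩ B := by
        rw [Finset.mem_inter]
        exact ⟨A.min'_mem hAne, by rw [hxy]; exact B.min'_mem hBne⟩
      have := hint A hA B hB hAB
      have : (A ∩ B).card = 0 := by omega
      rw [Finset.card_eq_zero] at this
      simp [this] at hmem
    have hEne : E.Nonempty := Finset.card_pos.mp (by omega)
    obtain ⟨A0, hA0⟩ := hEne
    have hile : (i : ℕ) ≤ N - 1 := by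
      have := hcol A0 hA0
      omega
    by_cases hcase : (i : ℕ) < N - 1
    · -- all minima lie in an interval of length r - 1, but there are r of them
      have hdiv : ∀ A ∈ E, f A / (r - 1) = (i : ℕ) := by
        intro A hA
        have := hcol A hA
        omega
      have hsub : E.image f ⊆ Finset.Ico ((i : ℕ) * (r - 1)) ((i : ℕ) * (r - 1) + (r - 1)) := by
        intro m hm
        obtain ⟨A, hA, rfl⟩ := Finset.mem_image.mp hm
        rw [Finset.mem_Ico]
        constructor
        · rw [← Nat.le_div_iff_mul_le hr1, hdiv A hA]
        · rw [show (i : ℕ) * (r - 1) + (r - 1) = ((i : ℕ) + 1) * (r - 1) from by ring,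
            ← Nat.div_lt_iff_lt_mul hr1, hdiv A hA]
          omega
      have hc1 : (E.image f).card = r := by
        rw [Finset.card_image_of_injOn hfinj, hEcard]
      have hc2 := Finset.card_le_card hsub
      rw [hc1, Nat.card_Ico, Nat.add_sub_cancel_left] at hc2
      omega
    · -- last color: everything is inside the last n - (N-1)(r-1) elements
      have hival : (i : ℕ) = N - 1 := by omega
      have hbig : ∀ A ∈ E, ∀ x ∈ A, (N - 1) * (r - 1) ≤ (x : ℕ) := by
        intro A hA x hx
        have hAne := hne A hA
        have hfA : f A = ((A.min' hAne : Fin n) : ℕ) := by simp [hfdef, hAne]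
        have hcolA := hcol A hA
        have hdivA : N - 1 ≤ f A / (r - 1) := by omega
        have h1 : (N - 1) * (r - 1) ≤ f A := (Nat.le_div_iff_mul_le hr1).mp hdivA
        have h2 : A.min' hAne ≤ x := A.min'_le x hx
        have : ((A.min' hAne : Fin n) : ℕ) ≤ (x : ℕ) := h2
        omega
      set S := E.biUnion id with hSdef
      have hScard : S.card = r * k := by
        rw [hSdef, Finset.card_biUnion (by intro A hA B hB hAB; exact hdisj A hA B hB hAB)]
        simp only [id_eq]
        rw [Finset.sum_congr rfl (fun A hA => hAcard A hA), Finset.sum_const, hEcard,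
          smul_eq_mul]
      have hSsub : S ⊆ Finset.univ.filter fun x : Fin n => (N - 1) * (r - 1) ≤ (x : ℕ) := by
        intro x hx
        rw [hSdef, Finset.mem_biUnion] at hx
        obtain ⟨A, hA, hxA⟩ := hx
        rw [Finset.mem_filter]
        exact ⟨Finset.mem_univ x, hbig A hA x hxA⟩
      have := Finset.card_le_card hSsub
      rw [hScard, card_filter_ge] at this
      omega
  constructor
  · exact ⟨c, hproper⟩
  · intro hLB
    constructor
    · exact ⟨c, hproper⟩
    · intro C hC
      obtain ⟨c', hc'⟩ := hC
      exact hLB C c' hc'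
end

section
/- For integers n, s ≥ 0 and r ≥ 2 with n - s ≥ 1, the map sending each (n-s)-subset A of {1,...,rn-s} to A ∪ {rn-s+1, ..., rn} induces a hypergraph homomorphism from KG^r(rn-s, n-s, 0) to KG^r(rn, n, s); consequently χ(KG^r(rn, n, s)) ≥ χ(KG^r(rn-s, n-s, 0)). -/
/-- The map sending a subset `A ⊆ {1,…,rn-s}` to `A ∪ {rn-s+1,…,rn} ⊆ {1,…,rn}`. -/
def extendMap (r n s : ℕ) (A : Finset (Fin (r * n - s))) : Finset (Fin (r * n)) :=
  A.image (Fin.castLE (Nat.sub_le _ _)) ∪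
    Finset.univ.filter (fun j : Fin (r * n) => r * n - s ≤ (j : ℕ))

lemma card_tail (N m : ℕ) (h : m ≤ N) :
    (Finset.univ.filter fun j : Fin N => m ≤ (j : ℕ)).card = N - m := by
  rcases eq_or_lt_of_le h with rfl | h
  · rw [Finset.filter_false_of_mem, Finset.card_empty, Nat.sub_self]
    intro j _
    exact Nat.not_le.2 j.is_lt
  · have : (Finset.univ.filter fun j : Fin N => m ≤ (j : ℕ)) = Finset.Ici ⟨m, h⟩ := by
      ext j
      simp [Fin.le_def]
    rw [this, Fin.card_Ici]

lemma extendMap_injective (r n s : ℕ) : Function.Injective (extendMap r n s) := by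
  intro A B hAB
  have key : ∀ (A B : Finset (Fin (r * n - s))), extendMap r n s A = extendMap r n s B →
      A ⊆ B := by
    intro A B h x hx
    have hmem : (Fin.castLE (Nat.sub_le (r * n) s) x) ∈ extendMap r n s B := by
      rw [← h]
      exact Finset.mem_union_left _ (Finset.mem_image_of_mem _ hx)
    rcases Finset.mem_union.1 hmem with h1 | h1
    · obtain ⟨y, hy, hyx⟩ := Finset.mem_image.1 h1
      rwa [(Fin.castLE_injective _) hyx] at hy
    · exfalso
      have := (Finset.mem_filter.1 h1).2
      simp only [Fin.coe_castLE] at this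
      exact absurd this (Nat.not_le.2 x.is_lt)
  exact le_antisymm (key A B hAB) (key B A hAB.symm)

/-- The map `A ↦ A ∪ {rn-s+1,…,rn}` sends vertices of `KG^r(rn-s, n-s, 0)` to
vertices of `KG^r(rn, n, s)` and edges to edges, i.e. it is a hypergraph
homomorphism; consequently `χ(KG^r(rn, n, s)) ≥ χ(KG^r(rn-s, n-s, 0))`:
any number of colors properly coloring `KG^r(rn, n, s)` also properly colors
`KG^r(rn-s, n-s, 0)`. -/
theorem kneser_homomorphism_shift (r n s : ℕ) (hr : 2 ≤ r) (hns : 1 ≤ n - s) (hsn : s < n) :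
    (∀ A : Finset (Fin (r * n - s)), A.card = n - s → (extendMap r n s A).card = n) ∧
    (∀ E : Finset (Finset (Fin (r * n - s))), KGEdge r (r * n - s) (n - s) 0 E →
      KGEdge r (r * n) n s (E.image (extendMap r n s))) ∧
    (∀ C : ℕ, (∃ c : Finset (Fin (r * n)) → Fin C, KGProper r (r * n) n s C c) →
      ∃ c' : Finset (Fin (r * n - s)) → Fin C, KGProper r (r * n - s) (n - s) 0 C c') := by
  have hnrn : n ≤ r * n := Nat.le_mul_of_pos_left n (by omega)
  have hsrn : s ≤ r * n := le_trans hsn.le hnrn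
  have htail : (Finset.univ.filter fun j : Fin (r * n) => r * n - s ≤ (j : ℕ)).card = s := by
    rw [card_tail _ _ (Nat.sub_le _ _), Nat.sub_sub_self hsrn]
  have hdisj : ∀ A : Finset (Fin (r * n - s)),
      Disjoint (A.image (Fin.castLE (Nat.sub_le (r * n) s)))
        (Finset.univ.filter fun j : Fin (r * n) => r * n - s ≤ (j : ℕ)) := by
    intro A
    rw [Finset.disjoint_left]
    intro x hx hx'
    obtain ⟨y, _, rfl⟩ := Finset.mem_image.1 hx
    have := (Finset.mem_filter.1 hx').2
    simp only [Fin.coe_castLE] at this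
    exact absurd this (Nat.not_le.2 y.is_lt)
  have hcard : ∀ A : Finset (Fin (r * n - s)), A.card = n - s →
      (extendMap r n s A).card = n := by
    intro A hA
    rw [extendMap, Finset.card_union_of_disjoint (hdisj A),
      Finset.card_image_of_injective _ (Fin.castLE_injective _), hA, htail]
    omega
  have hinter : ∀ A B : Finset (Fin (r * n - s)), A ∩ B = ∅ →
      (extendMap r n s A ∩ extendMap r n s B).card ≤ s := by
    intro A B hAB
    have hsub : extendMap r n s A ∩ extendMap r n s B ⊆
        Finset.univ.filter fun j : Fin (r * n) => r * n - s ≤ (j : ℕ) := by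
      intro x hx
      have hxA := Finset.mem_inter.1 hx |>.1
      have hxB := Finset.mem_inter.1 hx |>.2
      rcases Finset.mem_union.1 hxA with h1 | h1
      · rcases Finset.mem_union.1 hxB with h2 | h2
        · exfalso
          obtain ⟨a, ha, rfl⟩ := Finset.mem_image.1 h1
          obtain ⟨b, hb, hba⟩ := Finset.mem_image.1 h2
          have : b = a := (Fin.castLE_injective _) hba
          subst this
          have : b ∈ A ∩ B := Finset.mem_inter.2 ⟨ha, hb⟩
          simp [hAB] at this
        · exact h2
      · exact h1
    calc (extendMap r n s A ∩ extendMap r n s B).card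
        ≤ _ := Finset.card_le_card hsub
      _ = s := htail
  have hedge : ∀ E : Finset (Finset (Fin (r * n - s))), KGEdge r (r * n - s) (n - s) 0 E →
      KGEdge r (r * n) n s (E.image (extendMap r n s)) := by
    intro E ⟨hEcard, hEk, hEint⟩
    refine ⟨?_, ?_, ?_⟩
    · rw [Finset.card_image_of_injective _ (extendMap_injective r n s), hEcard]
    · intro A hA
      obtain ⟨B, hB, rfl⟩ := Finset.mem_image.1 hA
      exact hcard B (hEk B hB)
    · intro A hA B hB hne
      obtain ⟨A', hA', rfl⟩ := Finset.mem_image.1 hA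
      obtain ⟨B', hB', rfl⟩ := Finset.mem_image.1 hB
      have hne' : A' ≠ B' := fun h => hne (by rw [h])
      have := hEint A' hA' B' hB' hne'
      exact hinter A' B' (Finset.card_eq_zero.1 (Nat.le_zero.1 this))
  refine ⟨hcard, hedge, ?_⟩
  intro C ⟨c, hc⟩
  refine ⟨fun A => c (extendMap r n s A), ?_⟩
  intro E hE ⟨i, hi⟩
  apply hc (E.image (extendMap r n s)) (hedge E hE)
  exact ⟨i, fun A hA => by
    obtain ⟨B, hB, rfl⟩ := Finset.mem_image.1 hA
    exact hi B hB⟩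
end

section
/- Fix a prime p and integers n ≥ p(k-1)+1, k > s ≥ 0. Let x ⪯ y in (Z_p ∪ {0})^n \ {0} and let i ≠ j in {1,...,p} be such that |X_i| ≥ k-s, |X_i|+|X_0| ≥ k, |Y_j| ≥ k-s, |Y_j|+|Y_0| ≥ k. Define F_x^i to be the first min(k,|X_i|) elements of X_i together with the first k - min(k,|X_i|) elements of X_0, and define F_y^j analogously. Then |F_x^i ∩ F_y^j| ≤ s. -/
/-- For a sign vector `x ∈ (Z_p ∪ {0})^n`, the class `X_i = {j : x_j = ω^i}`. -/
def signClass {p n : ℕ} (x : Fin n → Option (Fin p)) (i : Fin p) : Finset (Fin n) :=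
  Finset.univ.filter (fun j => x j = some i)

/-- The zero class `X_0 = {j : x_j = 0}`. -/
def zeroClass {p n : ℕ} (x : Fin n → Option (Fin p)) : Finset (Fin n) :=
  Finset.univ.filter (fun j => x j = none)

/-- The set of the first (i.e. smallest) `t` elements of a finite set `X ⊆ {1,…,n}`. -/
def firstElems {n : ℕ} (X : Finset (Fin n)) (t : ℕ) : Finset (Fin n) :=
  ((X.sort (· ≤ ·)).take t).toFinset

/-- `F_x^i`: the first `min(k,|X_i|)` elements of `X_i` together with the first
`k - min(k,|X_i|)` elements of `X_0`. -/
def Fsel {p n : ℕ} (x : Fin n → Option (Fin p)) (i : Fin p) (k : ℕ) : Finset (Fin n) :=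
  firstElems (signClass x i) (min k (signClass x i).card) ∪
    firstElems (zeroClass x) (k - min k (signClass x i).card)

lemma firstElems_subset {n : ℕ} (X : Finset (Fin n)) (t : ℕ) : firstElems X t ⊆ X := by
  intro a ha
  have := List.take_subset t (X.sort (· ≤ ·)) (List.mem_toFinset.mp ha)
  exact (Finset.mem_sort _).mp this

lemma firstElems_card_le {n : ℕ} (X : Finset (Fin n)) (t : ℕ) :
    (firstElems X t).card ≤ t := by
  refine le_trans (List.toFinset_card_le _) ?_
  simp [List.length_take]

/-- If `x ⪯ y`, `i ≠ j`, and both classes are large enough, then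
`|F_x^i ∩ F_y^j| ≤ s`. -/
theorem Fsel_inter_card_le (p n k s : ℕ) (hp : p.Prime)
    (hn : p * (k - 1) + 1 ≤ n) (hs : s < k)
    (x y : Fin n → Option (Fin p))
    (hx : x ≠ fun _ => none) (hy : y ≠ fun _ => none)
    (hprec : ∀ l : Fin p, signClass x l ⊆ signClass y l)
    (i j : Fin p) (hij : i ≠ j)
    (hxi : k - s ≤ (signClass x i).card)
    (hxi0 : k ≤ (signClass x i).card + (zeroClass x).card)
    (hyj : k - s ≤ (signClass y j).card)
    (hyj0 : k ≤ (signClass y j).card + (zeroClass y).card) :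
    (Fsel x i k ∩ Fsel y j k).card ≤ s := by
  have hsub : Fsel x i k ∩ Fsel y j k ⊆
      firstElems (zeroClass x) (k - min k (signClass x i).card) := by
    intro m hm
    obtain ⟨h1, h2⟩ := Finset.mem_inter.mp hm
    rcases Finset.mem_union.mp h1 with hA | hB
    · have hxm : x m = some i := by
        have := firstElems_subset _ _ hA
        simpa [signClass] using this
      have hym : y m = some i := by
        have := hprec i (show m ∈ signClass x i by simp [signClass, hxm])
        simpa [signClass] using this
      exfalso
      rcases Finset.mem_union.mp h2 with hC | hD
      · have : y m = some j := by
          have := firstElems_subset _ _ hC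
          simpa [signClass] using this
        rw [hym] at this
        exact hij (by injection this)
      · have : y m = none := by
          have := firstElems_subset _ _ hD
          simpa [zeroClass] using this
        simp [hym] at this
    · exact hB
  have h1 := Finset.card_le_card hsub
  have h2 := firstElems_card_le (zeroClass x) (k - min k (signClass x i).card)
  omega
end

section
/- For every n > s ≥ 0, χ(KG^2(2n, n, s)) ≥ 2s + 2. -/
/-!
Following Matoušek's combinatorial proof of Kneser's conjecture, label every nonzero sign vector
`x ∈ {+, -, 0}^N` as follows. If its alternation number `alt x` (the number of maximal blocks of
equal signs among its nonzero entries) is at most `2n - 2s - 2`, the label is `±alt x`, signed by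
the first nonzero entry. Otherwise one sign class of `x` has at least `n - s` elements, so there
are `n`-sets lying, up to `s` elements, inside `x⁺` and avoiding `x⁻`, or the other way round; the
label is `±(2n - 2s - 1 + m)`, where `m` is the largest colour of such a set and the sign tells on
which side it is attained. For `x ≼ y`, such sets for `x` and for `-y` meet in at most `s` points,
hence get different colours: the labelling is antipodal, has no complementary edge and takes
absolute values at most `2n - 2s - 2 + C`. Tucker's lemma then gives `N ≤ 2n - 2s - 2 + C`.

Tucker's lemma follows from Fan's theorem: an odd number of signed flags `x₀ ≽ x₁ ≽ ⋯` (one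
coordinate switched off at each step) carry labels that alternate in sign when sorted by absolute
value, starting with `+`. By induction on the dimension: modulo 2 that number counts the pairs of
a flag with `x₀ 0 = +` and a vertex whose removal leaves alternating labels; two fixed-point-free
involutions (swapping consecutive steps, flipping the sign of the first one) cancel all pairs but
those coming from the alternating flags of the hyperplane `x 0 = 0`.
-/

open Finset

theorem card_filter_threshold {ι β : Type*} [DecidableEq ι] [LinearOrder β] (key : ι → β)
    (A : ι → Prop) [DecidablePred A] (s : Finset ι) (hkey : Set.InjOn key s) :
    (#{j ∈ s | (∀ i ∈ s, key i < key j → A i) ∧ ∀ i ∈ s, key j < key i → ¬A i} : ZMod 2) =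
      (if ∀ i ∈ s, A i then 1 else 0) + if ∀ i ∈ s, ¬A i then 1 else 0 := by
  induction s using Finset.induction_on_max_value key with
  | empty =>
    -- both conditions hold vacuously, and `1 + 1 = 0` in `ZMod 2`
    simp only [filter_empty, card_empty, notMem_empty, IsEmpty.forall_iff, implies_true, if_true,
      Nat.cast_zero]
    decide
  | insert a s ha hmax ih =>
    have hlt : ∀ i ∈ s, key i < key a := fun i hi => (hmax i hi).lt_of_ne fun h =>
      ha (hkey.eq_iff (mem_insert_of_mem hi) (mem_insert_self a s) |>.1 h ▸ hi)
    have ih := ih (hkey.mono (subset_insert a s))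
    have top : ((∀ i ∈ insert a s, key i < key a → A i) ∧
        ∀ i ∈ insert a s, key a < key i → ¬A i) ↔ ∀ i ∈ s, A i := by
      simp only [forall_mem_insert, lt_irrefl, IsEmpty.forall_iff, true_and]
      exact ⟨fun h i hi => h.1 i hi (hlt i hi), fun h => ⟨fun i hi _ => h i hi,
        fun i hi hi' => absurd hi' (hlt i hi).asymm⟩⟩
    have below : ∀ j ∈ s, ((∀ i ∈ insert a s, key i < key j → A i) ∧
        ∀ i ∈ insert a s, key j < key i → ¬A i) ↔
        ((∀ i ∈ s, key i < key j → A i) ∧ (∀ i ∈ s, key j < key i → ¬A i)) ∧ ¬A a := by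
      intro j hj
      simp only [forall_mem_insert, hlt j hj, (hlt j hj).asymm, IsEmpty.forall_iff, true_and,
        forall_const]
      tauto
    rw [filter_insert, filter_congr below, if_congr top rfl rfl]
    by_cases hA : A a
    · simp only [hA, not_true_eq_false, and_false, filter_false, forall_mem_insert, true_and,
        false_and, if_false, add_zero]
      split_ifs <;> simp
    · simp only [hA, not_false_eq_true, and_true, forall_mem_insert, false_and, if_false,
        true_and, zero_add]
      rw [apply_ite card, card_insert_of_notMem (fun h => ha (mem_filter.1 h).1)]
      push_cast
      rw [ih]
      split_ifs <;> decide

section Alternating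

variable {ι κ : Type*}

def absRank (ℓ : ι → ℤ) (S : Finset ι) (i : ι) : ℕ := #{j ∈ S | (ℓ j).natAbs < (ℓ i).natAbs}

/-- Sorted by absolute value, the labels `ℓ i`, `i ∈ S`, are pairwise distinct in absolute value and
alternate in sign, starting with a positive one. -/
def IsAlternating (ℓ : ι → ℤ) (S : Finset ι) : Prop :=
  (∀ i ∈ S, ∀ j ∈ S, (ℓ i).natAbs = (ℓ j).natAbs → i = j) ∧
    ∀ i ∈ S, (0 < ℓ i ↔ Even (absRank ℓ S i))

instance [DecidableEq ι] (ℓ : ι → ℤ) (S : Finset ι) : Decidable (IsAlternating ℓ S) := by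
  unfold IsAlternating; infer_instance

theorem absRank_neg (ℓ : ι → ℤ) (S : Finset ι) : absRank (-ℓ) S = absRank ℓ S := by
  funext i
  simp [absRank]

theorem absRank_congr {ℓ ℓ' : ι → ℤ} {S : Finset ι} (h : ∀ i ∈ S, ℓ i = ℓ' i) {i : ι}
    (hi : i ∈ S) : absRank ℓ S i = absRank ℓ' S i := by
  unfold absRank
  rw [filter_congr fun j hj => by rw [h j hj, h i hi]]

theorem isAlternating_congr {ℓ ℓ' : ι → ℤ} {S : Finset ι} (h : ∀ i ∈ S, ℓ i = ℓ' i) :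
    IsAlternating ℓ S ↔ IsAlternating ℓ' S := by
  unfold IsAlternating
  refine and_congr (forall₂_congr fun i hi => forall₂_congr fun j hj => by rw [h i hi, h j hj])
    (forall₂_congr fun i hi => by rw [h i hi, absRank_congr h hi])

theorem absRank_map (φ : ι ↪ κ) (ℓ : κ → ℤ) (S : Finset ι) (i : ι) :
    absRank ℓ (S.map φ) (φ i) = absRank (ℓ ∘ φ) S i := by
  simp [absRank, filter_map]

theorem isAlternating_map [DecidableEq κ] (φ : ι ↪ κ) (ℓ : κ → ℤ) (S : Finset ι) :
    IsAlternating ℓ (S.map φ) ↔ IsAlternating (ℓ ∘ φ) S := by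
  simp [IsAlternating, absRank_map, φ.injective.eq_iff]

theorem absRank_erase [DecidableEq ι] (ℓ : ι → ℤ) {S : Finset ι} {j : ι} (hj : j ∈ S) (i : ι) :
    absRank ℓ (S.erase j) i =
      absRank ℓ S i - if (ℓ j).natAbs < (ℓ i).natAbs then 1 else 0 := by
  unfold absRank
  rw [filter_erase, card_erase_eq_ite]
  split_ifs <;> simp_all

variable [DecidableEq ι]

theorem isAlternating_erase_iff (ℓ : ι → ℤ) {S : Finset ι}
    (hinj : ∀ i ∈ S, ∀ j ∈ S, (ℓ i).natAbs = (ℓ j).natAbs → i = j) {j : ι} (hj : j ∈ S) :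
    IsAlternating ℓ (S.erase j) ↔
      (∀ i ∈ S, (ℓ i).natAbs < (ℓ j).natAbs → (0 < ℓ i ↔ Even (absRank ℓ S i))) ∧
        ∀ i ∈ S, (ℓ j).natAbs < (ℓ i).natAbs → ¬(0 < ℓ i ↔ Even (absRank ℓ S i)) := by
  have hrank : ∀ i ∈ S, (ℓ j).natAbs < (ℓ i).natAbs →
      (Even (absRank ℓ (S.erase j) i) ↔ ¬Even (absRank ℓ S i)) := fun i hi hlt => by
    have hpos : 1 ≤ absRank ℓ S i := card_pos.2 ⟨j, mem_filter.2 ⟨hj, hlt⟩⟩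
    rw [absRank_erase ℓ hj, if_pos hlt, Nat.even_sub hpos]
    simp
  have hne : ∀ i ∈ S, i ≠ j → (ℓ i).natAbs ≠ (ℓ j).natAbs := fun i hi hij h =>
    hij (hinj i hi j hj h)
  refine ⟨fun ⟨_, h⟩ => ⟨fun i hi hlt => ?_, fun i hi hlt => ?_⟩, fun ⟨hlo, hhi⟩ =>
    ⟨fun i hi i' hi' => hinj i (mem_of_mem_erase hi) i' (mem_of_mem_erase hi'), fun i hi => ?_⟩⟩
  · have := h i (mem_erase.2 ⟨fun hij => hlt.ne (by rw [hij]), hi⟩)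
    rwa [absRank_erase ℓ hj, if_neg hlt.asymm, Nat.sub_zero] at this
  · have := h i (mem_erase.2 ⟨fun hij => hlt.ne (by rw [hij]), hi⟩)
    rw [hrank i hi hlt] at this
    tauto
  · obtain ⟨hij, hi⟩ := mem_erase.1 hi
    rcases (hne i hi hij).lt_or_gt with hlt | hlt
    · rw [absRank_erase ℓ hj, if_neg hlt.asymm, Nat.sub_zero]
      exact hlo i hi hlt
    · rw [hrank i hi hlt]
      have := hhi i hi hlt
      tauto

theorem card_isAlternating_erase_of_injOn (ℓ : ι → ℤ) {S : Finset ι} (h0 : ∀ i ∈ S, ℓ i ≠ 0)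
    (hinj : ∀ i ∈ S, ∀ j ∈ S, (ℓ i).natAbs = (ℓ j).natAbs → i = j) :
    (#{j ∈ S | IsAlternating ℓ (S.erase j)} : ZMod 2) =
      (if IsAlternating ℓ S then 1 else 0) + if IsAlternating (-ℓ) S then 1 else 0 := by
  have hpos : IsAlternating ℓ S ↔ ∀ i ∈ S, (0 < ℓ i ↔ Even (absRank ℓ S i)) :=
    and_iff_right hinj
  have hneg : IsAlternating (-ℓ) S ↔ ∀ i ∈ S, ¬(0 < ℓ i ↔ Even (absRank ℓ S i)) := by
    refine (and_iff_right fun i hi j hj h => hinj i hi j hj (by simpa using h)).trans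
      (forall₂_congr fun i hi => ?_)
    rw [absRank_neg, Pi.neg_apply, neg_pos]
    rcases (h0 i hi).lt_or_gt with h | h <;> simp [h, h.asymm]
  rw [filter_congr fun j hj => isAlternating_erase_iff ℓ hinj hj,
    card_filter_threshold _ _ S fun i hi j hj h => hinj i hi j hj h]
  simp only [hpos, hneg]

theorem card_isAlternating_erase (ℓ : ι → ℤ) {S : Finset ι} (h0 : ∀ i ∈ S, ℓ i ≠ 0)
    (habs : ∀ i ∈ S, ∀ j ∈ S, (ℓ i).natAbs = (ℓ j).natAbs → ℓ i = ℓ j) :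
    (#{j ∈ S | IsAlternating ℓ (S.erase j)} : ZMod 2) =
      (if IsAlternating ℓ S then 1 else 0) + if IsAlternating (-ℓ) S then 1 else 0 := by
  by_cases hinj : ∀ i ∈ S, ∀ j ∈ S, (ℓ i).natAbs = (ℓ j).natAbs → i = j
  · exact card_isAlternating_erase_of_injOn ℓ h0 hinj
  push Not at hinj
  obtain ⟨i₁, hi₁, i₂, hi₂, habs₁₂, hne⟩ := hinj
  have hswap : ℓ ∘ Equiv.swap i₁ i₂ = ℓ := by
    funext x
    simp only [Function.comp_apply, Equiv.swap_apply_def]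
    split_ifs <;> simp_all [habs i₁ hi₁ i₂ hi₂ habs₁₂]
  have herase : (S.erase i₁).map (Equiv.swap i₁ i₂).toEmbedding = S.erase i₂ := by
    ext x
    simp only [mem_map_equiv, mem_erase, Equiv.symm_swap, Equiv.swap_apply_def]
    grind
  have hiff : IsAlternating ℓ (S.erase i₂) ↔ IsAlternating ℓ (S.erase i₁) := by
    rw [← herase, isAlternating_map, Equiv.coe_toEmbedding, hswap]
  have hsub : ∀ j ∈ S, IsAlternating ℓ (S.erase j) → j = i₁ ∨ j = i₂ := by
    intro j _ h
    by_contra! hj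
    exact hne (h.1 i₁ (mem_erase.2 ⟨hj.1.symm, hi₁⟩) i₂ (mem_erase.2 ⟨hj.2.symm, hi₂⟩) habs₁₂)
  have hfilter : {j ∈ S | IsAlternating ℓ (S.erase j)} =
      if IsAlternating ℓ (S.erase i₁) then {i₁, i₂} else ∅ := by
    ext j
    constructor
    · intro hj
      obtain ⟨hjS, halt⟩ := mem_filter.1 hj
      rcases hsub j hjS halt with rfl | rfl <;> simp_all
    · split_ifs with h <;> simp only [mem_insert, mem_singleton, notMem_empty, IsEmpty.forall_iff]
      rintro (rfl | rfl) <;> simp_all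
  have hnot : ∀ ℓ' : ι → ℤ, (∀ i, (ℓ' i).natAbs = (ℓ i).natAbs) → ¬IsAlternating ℓ' S :=
    fun ℓ' h halt => hne (halt.1 i₁ hi₁ i₂ hi₂ (by rw [h, h, habs₁₂]))
  rw [hfilter, if_neg (hnot ℓ fun _ => rfl), if_neg (hnot (-ℓ) fun _ => Int.natAbs_neg _)]
  split_ifs
  · rw [card_pair hne]
    rfl
  · simp

end Alternating

theorem natCast_card_eq_zero_of_involution {α : Type*} (s : Finset α) (g : α → α)
    (hmem : ∀ a ∈ s, g a ∈ s) (hinv : ∀ a ∈ s, g (g a) = a) (hne : ∀ a ∈ s, g a ≠ a) :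
    (#s : ZMod 2) = 0 := by
  rw [card_eq_sum_ones, Nat.cast_sum, Nat.cast_one]
  exact sum_involution (fun a _ => g a) (fun _ _ => by decide) (fun a ha _ => hne a ha) hmem hinv

def IsFaceOf {ι : Type*} (x y : ι → SignType) : Prop := ∀ i, x i = 0 ∨ x i = y i

theorem IsFaceOf.neg {ι : Type*} {x y : ι → SignType} (h : IsFaceOf x y) : IsFaceOf (-x) (-y) :=
  fun i => (h i).imp (fun h => by simp [h]) (fun h => by simp [h])

structure IsTuckerLabelling {m : ℕ} (L : (Fin m → SignType) → ℤ) : Prop where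
  ne_zero : ∀ x, x ≠ 0 → L x ≠ 0
  map_neg : ∀ x, x ≠ 0 → L (-x) = -L x
  ne_neg_of_isFaceOf : ∀ x y, x ≠ 0 → IsFaceOf x y → L x ≠ -L y

theorem Fin.le_swap_castSucc_succ_iff {k : ℕ} (t : Fin k) {p : Fin (k + 1)} (hp : p ≠ t.succ)
    (q : Fin (k + 1)) : p ≤ Equiv.swap t.castSucc t.succ q ↔ p ≤ q := by
  have hp' : (p : ℕ) ≠ t + 1 := fun h => hp (Fin.ext (by simpa using h))
  rcases eq_or_ne q t.castSucc with rfl | h₁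
  · simp only [Equiv.swap_apply_left, Fin.le_def, Fin.val_succ, Fin.val_castSucc]
    omega
  rcases eq_or_ne q t.succ with rfl | h₂
  · simp only [Equiv.swap_apply_right, Fin.le_def, Fin.val_succ, Fin.val_castSucc]
    omega
  rw [Equiv.swap_apply_of_ne_of_ne h₁ h₂]

/-- The coordinate `f.1 p` carries the sign `+` iff `f.2 p`; vertex `p` of the flag keeps the
coordinates at positions `≥ p`, so vertex `0` is the full sign vector. -/
abbrev SignedFlag (k : ℕ) := Equiv.Perm (Fin k) × (Fin k → Bool)

namespace SignedFlag

variable {k : ℕ}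

def vertex (f : SignedFlag k) (p : Fin k) : Fin k → SignType :=
  fun i => if p ≤ f.1.symm i then (if f.2 (f.1.symm i) then 1 else -1) else 0

def labels (L : (Fin k → SignType) → ℤ) (f : SignedFlag k) (p : Fin k) : ℤ := L (f.vertex p)

def neg (f : SignedFlag k) : SignedFlag k := (f.1, fun p => !f.2 p)

def PosAtZero (f : SignedFlag (k + 1)) : Prop := f.2 (f.1.symm 0) = true

instance (f : SignedFlag (k + 1)) : Decidable f.PosAtZero := by unfold PosAtZero; infer_instance

theorem vertex_ne_zero (f : SignedFlag k) (p : Fin k) : f.vertex p ≠ 0 := fun h => by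
  have := congrFun h (f.1 p)
  simp only [vertex, Equiv.symm_apply_apply, le_refl, if_true, Pi.zero_apply] at this
  split_ifs at this

theorem vertex_isFaceOf (f : SignedFlag k) {p q : Fin k} (h : p ≤ q) :
    IsFaceOf (f.vertex q) (f.vertex p) := fun i => by
  unfold vertex
  by_cases hi : q ≤ f.1.symm i
  · simp [hi, h.trans hi]
  · simp [hi]

theorem vertex_neg (f : SignedFlag k) (p : Fin k) : f.neg.vertex p = -f.vertex p := by
  funext i
  simp only [vertex, neg, Pi.neg_apply]
  by_cases hi : p ≤ f.1.symm i
  · simp only [hi, if_true]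
    rcases Bool.eq_false_or_eq_true (f.2 (f.1.symm i)) with h | h <;> simp [h]
  · simp [hi]

theorem neg_neg (f : SignedFlag k) : f.neg.neg = f := by simp [neg]

theorem posAtZero_neg (f : SignedFlag (k + 1)) : f.neg.PosAtZero ↔ ¬f.PosAtZero := by
  simp [PosAtZero, neg]

variable {L : (Fin k → SignType) → ℤ}

theorem labels_neg (hL : IsTuckerLabelling L) (f : SignedFlag k) :
    f.neg.labels L = -f.labels L := by
  funext p
  simp only [labels, vertex_neg, Pi.neg_apply, hL.map_neg _ (f.vertex_ne_zero p)]

theorem labels_ne_zero (hL : IsTuckerLabelling L) (f : SignedFlag k) (p : Fin k) :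
    f.labels L p ≠ 0 :=
  hL.ne_zero _ (f.vertex_ne_zero p)

theorem labels_eq_of_natAbs_eq (hL : IsTuckerLabelling L) (f : SignedFlag k) {p q : Fin k}
    (h : (f.labels L p).natAbs = (f.labels L q).natAbs) : f.labels L p = f.labels L q := by
  wlog hpq : q ≤ p generalizing p q
  · exact (this h.symm (le_of_not_ge hpq)).symm
  exact (Int.natAbs_eq_natAbs_iff.1 h).resolve_right
    (hL.ne_neg_of_isFaceOf _ _ (f.vertex_ne_zero p) (f.vertex_isFaceOf hpq))

def swapAt (f : SignedFlag (k + 1)) (t : Fin k) : SignedFlag (k + 1) :=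
  ((Equiv.swap t.castSucc t.succ).trans f.1, f.2 ∘ Equiv.swap t.castSucc t.succ)

theorem vertex_swapAt (f : SignedFlag (k + 1)) (t : Fin k) {p : Fin (k + 1)} (hp : p ≠ t.succ) :
    (f.swapAt t).vertex p = f.vertex p := by
  funext i
  simp [vertex, swapAt, Fin.le_swap_castSucc_succ_iff t hp]

theorem swapAt_swapAt (f : SignedFlag (k + 1)) (t : Fin k) : (f.swapAt t).swapAt t = f := by
  ext <;> simp [swapAt]

theorem swapAt_ne (f : SignedFlag (k + 1)) (t : Fin k) : f.swapAt t ≠ f := fun h => by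
  have h₁ := congrArg (fun g : SignedFlag (k + 1) => g.1 t.castSucc) h
  simp only [swapAt, Equiv.trans_apply, Equiv.swap_apply_left, EmbeddingLike.apply_eq_iff_eq] at h₁
  exact (Fin.castSucc_lt_succ (i := t)).ne' h₁

theorem posAtZero_swapAt (f : SignedFlag (k + 1)) (t : Fin k) :
    (f.swapAt t).PosAtZero ↔ f.PosAtZero := by
  simp [PosAtZero, swapAt]

def flipZero (f : SignedFlag (k + 1)) : SignedFlag (k + 1) :=
  (f.1, Function.update f.2 0 (!f.2 0))

theorem vertex_flipZero (f : SignedFlag (k + 1)) {p : Fin (k + 1)} (hp : p ≠ 0) :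
    f.flipZero.vertex p = f.vertex p := by
  funext i
  unfold vertex flipZero
  rcases eq_or_ne (f.1.symm i) 0 with h | h
  · simp [h, hp]
  · simp [Function.update_of_ne h]

theorem flipZero_flipZero (f : SignedFlag (k + 1)) : f.flipZero.flipZero = f := by
  ext <;> simp [flipZero]

theorem flipZero_ne (f : SignedFlag (k + 1)) : f.flipZero ≠ f := fun h => by
  simpa [flipZero] using congrArg (fun g : SignedFlag (k + 1) => g.2 0) h

theorem posAtZero_flipZero (f : SignedFlag (k + 1)) (h : f.1 0 ≠ 0) :
    f.flipZero.PosAtZero ↔ f.PosAtZero := by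
  have : f.1.symm 0 ≠ 0 := fun h' => h ((Equiv.symm_apply_eq f.1).1 h').symm
  simp [PosAtZero, flipZero, Function.update_of_ne this]

def extend (f : SignedFlag k) : SignedFlag (k + 1) :=
  (Equiv.Perm.decomposeFin.symm (0, f.1), Fin.cons true f.2)

def restrict (f : SignedFlag (k + 1)) : SignedFlag k :=
  ((Equiv.Perm.decomposeFin f.1).2, Fin.tail f.2)

theorem extend_apply_zero (f : SignedFlag k) : f.extend.1 0 = 0 :=
  Equiv.Perm.decomposeFin_symm_apply_zero 0 f.1

theorem extend_symm_succ (f : SignedFlag k) (i : Fin k) :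
    f.extend.1.symm i.succ = (f.1.symm i).succ := by
  rw [Equiv.symm_apply_eq, extend, Equiv.Perm.decomposeFin_symm_apply_succ, Equiv.swap_self,
    Equiv.refl_apply, Equiv.apply_symm_apply]

theorem posAtZero_extend (f : SignedFlag k) : f.extend.PosAtZero := by
  have : f.extend.1.symm 0 = 0 := by rw [Equiv.symm_apply_eq, extend_apply_zero]
  rw [PosAtZero, this]
  simp [extend]

theorem restrict_extend (f : SignedFlag k) : f.extend.restrict = f := by
  simp [extend, restrict]

theorem extend_restrict (f : SignedFlag (k + 1)) (h0 : f.1 0 = 0) (hpos : f.PosAtZero) :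
    f.restrict.extend = f := by
  have hdec : Equiv.Perm.decomposeFin f.1 = (0, (Equiv.Perm.decomposeFin f.1).2) := by
    refine Prod.ext ?_ rfl
    conv_rhs => rw [← h0, ← Equiv.Perm.decomposeFin.symm_apply_apply f.1]
    rw [Equiv.Perm.decomposeFin_symm_apply_zero]
  have hσ : f.2 0 = true := by
    have : f.1.symm 0 = 0 := by rw [Equiv.symm_apply_eq, h0]
    rwa [PosAtZero, this] at hpos
  refine Prod.ext ?_ ?_
  · simp only [extend, restrict]
    rw [← hdec, Equiv.symm_apply_apply]
  · simp only [extend, restrict]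
    rw [← hσ, Fin.cons_self_tail]

theorem vertex_extend_succ (f : SignedFlag k) (t : Fin k) :
    f.extend.vertex t.succ = Fin.cons 0 (f.vertex t) := by
  funext i
  refine Fin.cases ?_ (fun i => ?_) i
  · have : f.extend.1.symm 0 = 0 := by rw [Equiv.symm_apply_eq, extend_apply_zero]
    simp [vertex, this, Fin.succ_ne_zero]
  · simp only [vertex, extend_symm_succ, Fin.succ_le_succ_iff, Fin.cons_succ]
    simp [extend]

end SignedFlag

section Fan

open SignedFlag

variable {k : ℕ}

theorem IsFaceOf.cons_zero {x y : Fin k → SignType} (h : IsFaceOf x y) :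
    IsFaceOf (Fin.cons 0 x : Fin (k + 1) → SignType) (Fin.cons 0 y) := fun i =>
  Fin.cases (Or.inl rfl) (fun i => by simpa using h i) i

theorem IsTuckerLabelling.cons_zero {L : (Fin (k + 1) → SignType) → ℤ}
    (hL : IsTuckerLabelling L) :
    IsTuckerLabelling fun x : Fin k → SignType => L (Fin.cons 0 x) := by
  have hne : ∀ x : Fin k → SignType, x ≠ 0 → (Fin.cons 0 x : Fin (k + 1) → SignType) ≠ 0 :=
    fun x hx h => hx (funext fun i => by simpa using congrFun h i.succ)
  refine ⟨fun x hx => hL.ne_zero _ (hne x hx), fun x hx => ?_, fun x y hx hxy =>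
    hL.ne_neg_of_isFaceOf _ _ (hne x hx) hxy.cons_zero⟩
  have : (Fin.cons 0 (-x) : Fin (k + 1) → SignType) = -Fin.cons 0 x := by
    funext i
    refine Fin.cases ?_ (fun i => ?_) i <;> simp
  simp only [this, hL.map_neg _ (hne x hx)]

theorem card_isAlternating_eq_posAtZero {L : (Fin (k + 1) → SignType) → ℤ}
    (hL : IsTuckerLabelling L) :
    #{f : SignedFlag (k + 1) | IsAlternating (f.labels L) univ} =
      #{f : SignedFlag (k + 1) | f.PosAtZero ∧ IsAlternating (f.labels L) univ} +
        #{f : SignedFlag (k + 1) | f.PosAtZero ∧ IsAlternating (-f.labels L) univ} := by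
  rw [← card_filter_add_card_filter_not PosAtZero, filter_filter, filter_filter]
  congr 1
  · simp only [and_comm]
  · refine card_nbij' neg neg (fun f hf => ?_) (fun f hf => ?_) (fun f _ => neg_neg f)
      (fun f _ => neg_neg f)
    all_goals
      simp only [coe_filter, mem_univ, true_and, Set.mem_ofPred_eq, posAtZero_neg, labels_neg hL,
        _root_.neg_neg] at hf ⊢
      tauto

theorem card_isAlternating_eq_sum_erase {L : (Fin (k + 1) → SignType) → ℤ}
    (hL : IsTuckerLabelling L) :
    (#{f : SignedFlag (k + 1) | IsAlternating (f.labels L) univ} : ZMod 2) =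
      ∑ j, (#{f : SignedFlag (k + 1) | f.PosAtZero ∧
        IsAlternating (f.labels L) (univ.erase j)} : ZMod 2) := by
  have hdel (f : SignedFlag (k + 1)) := card_isAlternating_erase (f.labels L) (S := univ)
    (fun p _ => f.labels_ne_zero hL p) (fun _ _ _ _ h => f.labels_eq_of_natAbs_eq hL h)
  have hdouble := sum_card_bipartiteAbove_eq_sum_card_bipartiteBelow
    (fun (f : SignedFlag (k + 1)) j => IsAlternating (f.labels L) (univ.erase j))
    (s := {f | f.PosAtZero}) (t := univ)
  simp only [bipartiteAbove, bipartiteBelow, filter_filter] at hdouble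
  rw [card_isAlternating_eq_posAtZero hL, ← Nat.cast_sum, ← hdouble, Nat.cast_sum, Nat.cast_add,
    ← filter_filter, ← filter_filter, card_filter, card_filter, Nat.cast_sum, Nat.cast_sum,
    ← sum_add_distrib]
  refine sum_congr rfl fun f _ => ?_
  rw [hdel]
  push_cast
  rfl

variable {L : (Fin (k + 1) → SignType) → ℤ}

theorem card_isAlternating_erase_succ (t : Fin k) :
    (#{f : SignedFlag (k + 1) | f.PosAtZero ∧
      IsAlternating (f.labels L) (univ.erase t.succ)} : ZMod 2) = 0 := by
  -- swapping the steps `t` and `t + 1` of a flag moves only its vertex `t + 1`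
  refine natCast_card_eq_zero_of_involution _ (swapAt · t) (fun f hf => ?_)
    (fun f _ => swapAt_swapAt f t) (fun f _ => swapAt_ne f t)
  simp only [mem_filter, mem_univ, true_and, posAtZero_swapAt] at hf ⊢
  refine ⟨hf.1, (isAlternating_congr fun p hp => ?_).2 hf.2⟩
  simp only [labels, vertex_swapAt f t (ne_of_mem_erase hp)]

theorem card_isAlternating_erase_zero_eq_fixed :
    (#{f : SignedFlag (k + 1) | f.PosAtZero ∧
      IsAlternating (f.labels L) (univ.erase 0)} : ZMod 2) =
      #{f : SignedFlag (k + 1) | f.PosAtZero ∧ f.1 0 = 0 ∧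
        IsAlternating (f.labels L) (univ.erase 0)} := by
  have hmoved : (#{f : SignedFlag (k + 1) | (f.PosAtZero ∧
      IsAlternating (f.labels L) (univ.erase 0)) ∧ f.1 0 ≠ 0} : ZMod 2) = 0 := by
    -- flipping the sign of step `0` moves only the full vertex, and keeps the sign of
    -- coordinate `0` unless step `0` is coordinate `0`
    refine natCast_card_eq_zero_of_involution _ flipZero (fun f hf => ?_)
      (fun f _ => flipZero_flipZero f) (fun f _ => flipZero_ne f)
    simp only [mem_filter, mem_univ, true_and] at hf ⊢
    refine ⟨⟨(posAtZero_flipZero f hf.2).2 hf.1.1, (isAlternating_congr fun p hp => ?_).2 hf.1.2⟩,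
      hf.2⟩
    simp only [labels, vertex_flipZero f (ne_of_mem_erase hp)]
  rw [← card_filter_add_card_filter_not (fun f : SignedFlag (k + 1) => f.1 0 = 0), filter_filter,
    filter_filter, Nat.cast_add, hmoved, add_zero]
  exact congrArg _ (congrArg _ (filter_congr fun f _ => by tauto))

theorem isAlternating_labels_extend (f : SignedFlag k) :
    IsAlternating (f.extend.labels L) (univ.erase 0) ↔
      IsAlternating (f.labels fun x => L (Fin.cons 0 x)) univ := by
  have : univ.erase (0 : Fin (k + 1)) = univ.map (Fin.succEmb k) := by
    rw [← Fin.Ioi_zero_eq_map]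
    ext i
    simp
  rw [this, isAlternating_map]
  exact isAlternating_congr fun t _ => by simp [labels, vertex_extend_succ]

theorem card_fixed_isAlternating_erase_zero_eq :
    #{f : SignedFlag (k + 1) | f.PosAtZero ∧ f.1 0 = 0 ∧
      IsAlternating (f.labels L) (univ.erase 0)} =
      #{f : SignedFlag k | IsAlternating (f.labels fun x => L (Fin.cons 0 x)) univ} := by
  refine card_nbij' restrict extend (fun f hf => ?_) (fun f hf => ?_) (fun f hf => ?_)
    (fun f _ => restrict_extend f)
  · simp only [coe_filter, mem_univ, true_and, Set.mem_ofPred_eq] at hf ⊢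
    rw [← isAlternating_labels_extend, extend_restrict f hf.2.1 hf.1]
    exact hf.2.2
  · simp only [coe_filter, mem_univ, true_and, Set.mem_ofPred_eq] at hf ⊢
    exact ⟨posAtZero_extend f, extend_apply_zero f, (isAlternating_labels_extend f).2 hf⟩
  · simp only [coe_filter, mem_univ, true_and, Set.mem_ofPred_eq] at hf
    exact extend_restrict f hf.2.1 hf.1

end Fan

/-- Ky Fan's parity theorem for the octahedral subdivision of the cross-polytope. -/
theorem card_isAlternating_labels_eq_one {k : ℕ} {L : (Fin k → SignType) → ℤ}
    (hL : IsTuckerLabelling L) :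
    (#{f : SignedFlag k | IsAlternating (f.labels L) univ} : ZMod 2) = 1 := by
  induction k with
  | zero => simp [IsAlternating]
  | succ k ih =>
    rw [card_isAlternating_eq_sum_erase hL, Fin.sum_univ_succ,
      card_isAlternating_erase_zero_eq_fixed, card_fixed_isAlternating_erase_zero_eq,
      ih hL.cons_zero]
    simp [card_isAlternating_erase_succ]

theorem IsTuckerLabelling.le_of_natAbs_le {m M : ℕ} {L : (Fin m → SignType) → ℤ}
    (hL : IsTuckerLabelling L) (hM : ∀ x, x ≠ 0 → (L x).natAbs ≤ M) : m ≤ M := by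
  obtain ⟨f, hf⟩ : ∃ f : SignedFlag m, IsAlternating (f.labels L) univ := by
    by_contra! h
    have := card_isAlternating_labels_eq_one hL
    rw [filter_false_of_mem fun f _ => h f, card_empty, Nat.cast_zero] at this
    exact zero_ne_one this
  have hinj : Set.InjOn (fun p => (f.labels L p).natAbs) (univ : Finset (Fin m)) :=
    fun p _ q _ h => hf.1 p (mem_univ p) q (mem_univ q) h
  calc m = #(univ.image fun p => (f.labels L p).natAbs) := by
        rw [card_image_of_injOn hinj, card_univ, Fintype.card_fin]
    _ ≤ #(Icc 1 M) := card_le_card fun v hv => by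
        obtain ⟨p, -, rfl⟩ := mem_image.1 hv
        exact mem_Icc.2 ⟨Int.natAbs_pos.2 (f.labels_ne_zero hL p),
          hM _ (f.vertex_ne_zero p)⟩
    _ = M := by simp

namespace List

variable {α β : Type*} [DecidableEq α] [DecidableEq β]

/-- The number of maximal blocks of equal consecutive entries of `l` that do not continue `o`. -/
def runsFrom : Option α → List α → ℕ
  | _, [] => 0
  | o, a :: l => (if o = some a then 0 else 1) + runsFrom (some a) l

def runs (l : List α) : ℕ := runsFrom none l

@[simp] theorem runsFrom_nil (o : Option α) : runsFrom o [] = 0 := rfl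

@[simp] theorem runsFrom_cons (o : Option α) (a : α) (l : List α) :
    runsFrom o (a :: l) = (if o = some a then 0 else 1) + runsFrom (some a) l := rfl

theorem runs_cons (a : α) (l : List α) : runs (a :: l) = 1 + runsFrom (some a) l := by
  simp [runs]

theorem runsFrom_le_add (o : Option α) (a : α) (l : List α) :
    runsFrom o l ≤ (if o = some a then 0 else 1) + runsFrom (some a) l := by
  cases l with
  | nil => simp
  | cons b l =>
    simp only [runsFrom_cons, Option.some.injEq]
    split_ifs <;> simp_all
    omega

theorem Sublist.runsFrom_le {l₁ l₂ : List α} (h : l₁ <+ l₂) (o : Option α) :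
    runsFrom o l₁ ≤ runsFrom o l₂ := by
  induction h generalizing o with
  | slnil => rfl
  | cons a _ ih => exact (ih o).trans (runsFrom_le_add o a _)
  | cons_cons a _ ih => simpa using ih (some a)

theorem Sublist.runs_le {l₁ l₂ : List α} (h : l₁ <+ l₂) : runs l₁ ≤ runs l₂ := h.runsFrom_le none

theorem Sublist.runs_lt_of_ne {a b : α} {l₁ l₂ : List α} (h : a :: l₁ <+ b :: l₂) (hab : a ≠ b) :
    runs (a :: l₁) < runs (b :: l₂) := by
  cases h with
  | cons_cons => exact absurd rfl hab
  | cons _ h =>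
    have := h.runsFrom_le (some b)
    simp only [runsFrom_cons, Option.some.injEq, hab.symm, if_false] at this
    rw [runs_cons, runs_cons]
    omega

theorem runsFrom_map {f : α → β} (hf : Function.Injective f) (o : Option α) (l : List α) :
    runsFrom (o.map f) (l.map f) = runsFrom o l := by
  induction l generalizing o with
  | nil => rfl
  | cons a l ih =>
    simp only [map_cons, runsFrom_cons, ← Option.map_some, ih]
    congr 2
    cases o <;> simp [hf.eq_iff]

theorem runs_map {f : α → β} (hf : Function.Injective f) (l : List α) :
    runs (l.map f) = runs l :=
  runsFrom_map hf none l

theorem runsFrom_le_two_mul_count {a b : α} {l : List α} (hl : ∀ x ∈ l, x = a ∨ x = b) :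
    runsFrom (some a) l ≤ 2 * count b l ∧ runsFrom (some a) l ≤ 2 * count a l + 1 := by
  induction l generalizing a b with
  | nil => simp
  | cons c l ih =>
    simp only [mem_cons, forall_eq_or_imp] at hl
    rcases hl.1 with rfl | rfl
    · obtain ⟨ih₁, ih₂⟩ := ih hl.2
      have := count_le_count_cons (a := b) (b := c) (l := l)
      simp only [runsFrom_cons, if_true, zero_add, count_cons_self]
      omega
    · by_cases hab : a = c
      · subst hab
        obtain ⟨ih₁, ih₂⟩ := ih hl.2
        simp only [runsFrom_cons, if_true, zero_add, count_cons_self]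
        omega
      · obtain ⟨ih₁, ih₂⟩ := ih (a := c) (b := a) fun x hx => (hl.2 x hx).symm
        simp only [runsFrom_cons, Option.some.injEq, hab, if_false, count_cons_self, count_cons,
          beq_iff_eq, Ne.symm hab]
        omega

theorem runs_cons_le_two_mul_count {a b : α} {l : List α} (hl : ∀ x ∈ l, x = a ∨ x = b) :
    runs (a :: l) ≤ 2 * count a (a :: l) := by
  rw [runs_cons, count_cons_self]
  have := (runsFrom_le_two_mul_count hl).2
  omega

end List

theorem KGProper.ne_of_card_inter_le {N n s C : ℕ} {c : Finset (Fin N) → Fin C}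
    (hc : KGProper 2 N n s C c) (hs : s < n) {S T : Finset (Fin N)} (hS : #S = n) (hT : #T = n)
    (hST : #(S ∩ T) ≤ s) : c S ≠ c T := by
  intro hcol
  have hne : S ≠ T := by
    rintro rfl
    rw [inter_self] at hST
    omega
  refine hc {S, T} ⟨card_pair hne, ?_, ?_⟩ ⟨c S, ?_⟩
  · simp [hS, hT]
  · simp only [mem_insert, mem_singleton]
    rintro A (rfl | rfl) B (rfl | rfl) hAB <;> simp_all [inter_comm]
  · simp [hcol]

namespace Kneser

variable {N : ℕ}

def signs (x : Fin N → SignType) : List SignType := (List.ofFn x).filter (· ≠ 0)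

def alternation (x : Fin N → SignType) : ℕ := (signs x).runs

def leadSign (x : Fin N → SignType) : SignType := (signs x).headD 0

theorem ne_zero_of_mem_signs {x : Fin N → SignType} {a : SignType} (ha : a ∈ signs x) : a ≠ 0 := by
  simpa using (List.mem_filter.1 ha).2

theorem signs_ne_nil {x : Fin N → SignType} (hx : x ≠ 0) : signs x ≠ [] := by
  obtain ⟨i, hi⟩ := Function.ne_iff.1 hx
  exact List.ne_nil_of_mem (List.mem_filter.2 ⟨List.mem_ofFn.2 ⟨i, rfl⟩, by simpa using hi⟩)

theorem count_signs (x : Fin N → SignType) {a : SignType} (ha : a ≠ 0) :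
    (signs x).count a = #{i | x i = a} := by
  rw [signs, List.count_filter (by simpa using ha), ← Multiset.coe_count, ← Fin.univ_val_map,
    Multiset.count_map, card_def, filter_val]
  simp [eq_comm]

theorem signs_neg (x : Fin N → SignType) : signs (-x) = (signs x).map Neg.neg := by
  have : List.ofFn (-x) = (List.ofFn x).map Neg.neg := by rw [List.map_ofFn]; rfl
  rw [signs, signs, this, List.filter_map]
  congr 2
  funext a
  simp

theorem signs_sublist_of_isFaceOf {x y : Fin N → SignType} (h : IsFaceOf x y) :
    (signs x).Sublist (signs y) := by
  simp only [signs, List.ofFn_eq_map]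
  induction List.finRange N with
  | nil => exact List.Sublist.slnil
  | cons i l ih =>
    simp only [List.map_cons, List.filter_cons]
    rcases h i with hi | hi
    · simp only [hi, ne_eq, not_true_eq_false, decide_false, Bool.false_eq_true, if_false]
      split_ifs
      exacts [ih.cons _, ih]
    · rw [hi]
      split_ifs
      exacts [ih.cons_cons _, ih]

theorem alternation_le_of_isFaceOf {x y : Fin N → SignType} (h : IsFaceOf x y) :
    alternation x ≤ alternation y :=
  (signs_sublist_of_isFaceOf h).runs_le

theorem alternation_lt_of_isFaceOf {x y : Fin N → SignType} (hx : x ≠ 0) (h : IsFaceOf x y)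
    (hlead : leadSign x ≠ leadSign y) : alternation x < alternation y := by
  have hsub := signs_sublist_of_isFaceOf h
  obtain ⟨a, l, hxl⟩ := List.exists_cons_of_ne_nil (signs_ne_nil hx)
  have hy : signs y ≠ [] := fun h => signs_ne_nil hx (List.eq_nil_of_sublist_nil (h ▸ hsub))
  obtain ⟨b, l', hyl⟩ := List.exists_cons_of_ne_nil hy
  rw [alternation, alternation, hxl, hyl]
  rw [leadSign, leadSign, hxl, hyl] at hlead
  exact (hxl ▸ hyl ▸ hsub).runs_lt_of_ne hlead

theorem alternation_neg (x : Fin N → SignType) : alternation (-x) = alternation x := by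
  rw [alternation, signs_neg, List.runs_map neg_injective, alternation]

theorem leadSign_neg (x : Fin N → SignType) : leadSign (-x) = -leadSign x := by
  rw [leadSign, leadSign, signs_neg]
  cases signs x <;> simp

theorem leadSign_eq_one_or {x : Fin N → SignType} (hx : x ≠ 0) :
    leadSign x = 1 ∨ leadSign x = -1 := by
  obtain ⟨a, l, hxl⟩ := List.exists_cons_of_ne_nil (signs_ne_nil hx)
  have ha : a ≠ 0 := ne_zero_of_mem_signs (hxl ▸ List.mem_cons_self)
  rw [leadSign, hxl, List.headD_cons]
  cases a <;> simp_all

theorem one_le_alternation {x : Fin N → SignType} (hx : x ≠ 0) : 1 ≤ alternation x := by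
  obtain ⟨a, l, hxl⟩ := List.exists_cons_of_ne_nil (signs_ne_nil hx)
  rw [alternation, hxl, List.runs_cons]
  omega

theorem alternation_le_two_mul_card {x : Fin N → SignType} (hx : x ≠ 0) :
    alternation x ≤ 2 * #{i | x i = leadSign x} := by
  obtain ⟨a, l, hxl⟩ := List.exists_cons_of_ne_nil (signs_ne_nil hx)
  have ha : a ≠ 0 := ne_zero_of_mem_signs (hxl ▸ List.mem_cons_self)
  have hl : ∀ b ∈ l, b = a ∨ b = -a := fun b hb => by
    have hb0 : b ≠ 0 := ne_zero_of_mem_signs (hxl ▸ List.mem_cons_of_mem a hb)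
    cases a <;> cases b <;> simp_all
  have hlead : leadSign x = a := by rw [leadSign, hxl, List.headD_cons]
  rw [alternation, ← count_signs x (hlead ▸ ha), hlead, hxl]
  exact List.runs_cons_le_two_mul_count hl

def plusSet (x : Fin N → SignType) : Finset (Fin N) := {i | x i = 1}

def candidates (n s : ℕ) (x : Fin N → SignType) : Finset (Finset (Fin N)) :=
  {S | #S = n ∧ Disjoint S (plusSet (-x)) ∧ #(S \ plusSet x) ≤ s}

theorem plusSet_subset_of_isFaceOf {x y : Fin N → SignType} (h : IsFaceOf x y) :
    plusSet x ⊆ plusSet y := fun i hi => by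
  simp only [plusSet, mem_filter, mem_univ, true_and] at hi ⊢
  rcases h i with h' | h' <;> simp_all

theorem card_inter_le_of_mem_candidates {n s : ℕ} {x y : Fin N → SignType} (h : IsFaceOf x y)
    {S T : Finset (Fin N)} (hS : S ∈ candidates n s x) (hT : T ∈ candidates n s (-y)) :
    #(S ∩ T) ≤ s := by
  simp only [candidates, mem_filter, mem_univ, true_and, _root_.neg_neg] at hS hT
  refine le_trans (card_le_card fun i hi => ?_) hS.2.2
  obtain ⟨hiS, hiT⟩ := mem_inter.1 hi
  exact mem_sdiff.2 ⟨hiS, fun hix => disjoint_left.1 hT.2.1 hiT (plusSet_subset_of_isFaceOf h hix)⟩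

theorem disjoint_plusSet_neg (x : Fin N → SignType) : Disjoint (plusSet x) (plusSet (-x)) :=
  disjoint_filter.2 fun i _ h₁ h₂ => by simp_all

theorem card_plusSet_add_card_plusSet_neg_le (x : Fin N → SignType) :
    #(plusSet x) + #(plusSet (-x)) ≤ N := by
  rw [← card_union_of_disjoint (disjoint_plusSet_neg x)]
  exact (card_le_univ _).trans_eq (Fintype.card_fin N)

theorem candidates_nonempty {n s : ℕ} {x : Fin N → SignType} (hpos : n ≤ #(plusSet x) + s)
    (hneg : #(plusSet (-x)) + n ≤ N) : (candidates n s x).Nonempty := by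
  obtain ⟨P, hPx, hP⟩ := exists_subset_card_eq (min_le_right n #(plusSet x))
  have hdisj := disjoint_plusSet_neg x
  have hsub : plusSet x ⊆ (plusSet (-x))ᶜ := fun i hi => mem_compl.2 (disjoint_left.1 hdisj hi)
  have hcompl : n ≤ #(plusSet (-x))ᶜ := by rw [card_compl, Fintype.card_fin]; omega
  obtain ⟨S, hPS, hS, hSn⟩ := exists_subsuperset_card_eq (hPx.trans hsub)
    (hP.trans_le (min_le_left _ _)) hcompl
  refine ⟨S, mem_filter.2 ⟨mem_univ S, hSn, disjoint_left.2 fun i hi => mem_compl.1 (hS hi), ?_⟩⟩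
  calc #(S \ plusSet x) ≤ #(S \ P) := card_le_card (sdiff_subset_sdiff le_rfl hPx)
    _ = n - min n #(plusSet x) := by rw [card_sdiff_of_subset hPS, hSn, hP]
    _ ≤ s := by omega

theorem candidates_union_nonempty {n s : ℕ} {x : Fin N → SignType} (hx : x ≠ 0)
    (hN : 2 * n ≤ N) (hlarge : 2 * n < alternation x + 2 * s + 2) :
    (candidates n s x ∪ candidates n s (-x)).Nonempty := by
  wlog hlead : leadSign x = 1 generalizing x
  · have h := this (x := -x) (fun h => hx (funext fun i => by simpa using congrFun h i))
      (by rwa [alternation_neg])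
      (by rw [leadSign_neg, (leadSign_eq_one_or hx).resolve_left hlead]; rfl)
    rwa [_root_.neg_neg, union_comm] at h
  have hcard := alternation_le_two_mul_card hx
  rw [hlead] at hcard
  have hsum := card_plusSet_add_card_plusSet_neg_le x
  change alternation x ≤ 2 * #(plusSet x) at hcard
  by_cases hneg : #(plusSet (-x)) + n ≤ N
  · exact (candidates_nonempty (by omega) hneg).mono subset_union_left
  · refine (candidates_nonempty (by omega) ?_).mono subset_union_right
    rw [_root_.neg_neg]
    omega

variable {C : ℕ} (c : Finset (Fin N) → Fin C) (n s : ℕ)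

def maxColor (x : Fin N → SignType) : ℕ :=
  (candidates n s x ∪ candidates n s (-x)).sup fun S => (c S : ℕ)

def AttainsMaxColor (x : Fin N → SignType) : Prop :=
  ∃ S ∈ candidates n s x, (c S : ℕ) = maxColor c n s x

instance (x : Fin N → SignType) : Decidable (AttainsMaxColor c n s x) := by
  unfold AttainsMaxColor; infer_instance

variable {c n s}

theorem maxColor_neg (x : Fin N → SignType) : maxColor c n s (-x) = maxColor c n s x := by
  rw [maxColor, maxColor, _root_.neg_neg, union_comm]

theorem exists_mem_color_eq_maxColor {x : Fin N → SignType}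
    (hne : (candidates n s x ∪ candidates n s (-x)).Nonempty) :
    ∃ S ∈ candidates n s x ∪ candidates n s (-x), (c S : ℕ) = maxColor c n s x :=
  (exists_mem_eq_sup _ hne _).imp fun _ h => ⟨h.1, h.2.symm⟩

theorem attainsMaxColor_or_neg {x : Fin N → SignType}
    (hne : (candidates n s x ∪ candidates n s (-x)).Nonempty) :
    AttainsMaxColor c n s x ∨ AttainsMaxColor c n s (-x) := by
  obtain ⟨S, hS, hSc⟩ := exists_mem_color_eq_maxColor hne
  rcases mem_union.1 hS with h | h
  exacts [Or.inl ⟨S, h, hSc⟩, Or.inr ⟨S, h, hSc.trans (maxColor_neg x).symm⟩]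

theorem maxColor_lt {x : Fin N → SignType}
    (hne : (candidates n s x ∪ candidates n s (-x)).Nonempty) : maxColor c n s x < C := by
  obtain ⟨S, -, hSc⟩ := exists_mem_color_eq_maxColor (c := c) hne
  exact hSc ▸ (c S).isLt

theorem not_attainsMaxColor_of_isFaceOf (hc : KGProper 2 N n s C c) (hs : s < n)
    {x y : Fin N → SignType} (h : IsFaceOf x y) (hm : maxColor c n s x = maxColor c n s y)
    (hx : AttainsMaxColor c n s x) : ¬AttainsMaxColor c n s (-y) := by
  rintro ⟨T, hT, hTc⟩
  obtain ⟨S, hS, hSc⟩ := hx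
  exact hc.ne_of_card_inter_le hs (mem_filter.1 hS).2.1 (mem_filter.1 hT).2.1
    (card_inter_le_of_mem_candidates h hS hT) (Fin.ext (by rw [hSc, hTc, maxColor_neg, hm]))

variable (c n s) in
def kneserLabel (x : Fin N → SignType) : ℤ :=
  if alternation x + 2 * s + 2 ≤ 2 * n then leadSign x * alternation x
  else if AttainsMaxColor c n s x then 2 * n - 2 * s - 1 + maxColor c n s x
  else -(2 * n - 2 * s - 1 + maxColor c n s x)

theorem kneserLabel_of_small {x : Fin N → SignType} (hx : x ≠ 0)
    (h : alternation x + 2 * s + 2 ≤ 2 * n) :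
    kneserLabel c n s x = alternation x ∨ kneserLabel c n s x = -alternation x := by
  rw [kneserLabel, if_pos h]
  rcases leadSign_eq_one_or hx with h' | h' <;> simp [h']

theorem kneserLabel_ne_zero (hs : s < n) {x : Fin N → SignType} (hx : x ≠ 0) :
    kneserLabel c n s x ≠ 0 := by
  have := one_le_alternation hx
  by_cases h : alternation x + 2 * s + 2 ≤ 2 * n
  · rcases kneserLabel_of_small (c := c) hx h with h' | h' <;> rw [h'] <;> omega
  · rw [kneserLabel, if_neg h]
    split_ifs <;> omega

theorem kneserLabel_neg (hc : KGProper 2 N n s C c) (hs : s < n) (hN : 2 * n ≤ N)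
    {x : Fin N → SignType} (hx : x ≠ 0) : kneserLabel c n s (-x) = -kneserLabel c n s x := by
  rw [kneserLabel, kneserLabel, alternation_neg, leadSign_neg, maxColor_neg]
  split_ifs with hsmall hneg hpos hpos
  · simp [neg_mul]
  · exact absurd hneg (not_attainsMaxColor_of_isFaceOf hc hs (fun _ => Or.inr rfl) rfl hpos)
  · rw [_root_.neg_neg]
  · rfl
  · exact absurd ((attainsMaxColor_or_neg (candidates_union_nonempty hx hN (by omega))).resolve_left
      hpos) hneg

theorem kneserLabel_ne_neg (hc : KGProper 2 N n s C c) (hs : s < n) (hN : 2 * n ≤ N)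
    {x y : Fin N → SignType} (hx : x ≠ 0) (h : IsFaceOf x y) :
    kneserLabel c n s x ≠ -kneserLabel c n s y := by
  intro heq
  have hy : y ≠ 0 := fun hy => hx (funext fun i => by simpa [hy] using h i)
  have hle := alternation_le_of_isFaceOf h
  have hx1 := one_le_alternation hx
  by_cases hsx : alternation x + 2 * s + 2 ≤ 2 * n <;>
    by_cases hsy : alternation y + 2 * s + 2 ≤ 2 * n
  · by_cases hlead : leadSign x = leadSign y
    · rw [kneserLabel, kneserLabel, if_pos hsx, if_pos hsy, hlead] at heq
      rcases leadSign_eq_one_or hy with h' | h' <;> simp [h'] at heq <;> omega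
    · have hlt := alternation_lt_of_isFaceOf hx h hlead
      rcases kneserLabel_of_small (c := c) hx hsx with h₁ | h₁ <;>
        rcases kneserLabel_of_small (c := c) hy hsy with h₂ | h₂ <;> rw [h₁, h₂] at heq <;> omega
  · rcases kneserLabel_of_small (c := c) hx hsx with h₁ | h₁ <;>
      rw [h₁, kneserLabel, if_neg hsy] at heq <;> split_ifs at heq <;> omega
  · omega
  · have hne := candidates_union_nonempty (n := n) (s := s) hy hN (by omega)
    rw [kneserLabel, kneserLabel, if_neg hsx, if_neg hsy] at heq
    split_ifs at heq with hax hay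
    · omega
    · exact not_attainsMaxColor_of_isFaceOf hc hs h (by omega) hax
        ((attainsMaxColor_or_neg hne).resolve_left hay)
    · refine not_attainsMaxColor_of_isFaceOf hc hs h.neg ?_
        ((attainsMaxColor_or_neg (candidates_union_nonempty hx hN (by omega))).resolve_left hax)
        (by rwa [_root_.neg_neg])
      rw [maxColor_neg, maxColor_neg]
      omega
    · omega

theorem natAbs_kneserLabel_le (hs : s < n) (hN : 2 * n ≤ N) {x : Fin N → SignType} (hx : x ≠ 0) :
    (kneserLabel c n s x).natAbs ≤ 2 * n + C - 2 * s - 2 := by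
  by_cases hsx : alternation x + 2 * s + 2 ≤ 2 * n
  · rcases kneserLabel_of_small (c := c) hx hsx with h | h <;> rw [h] <;> simp <;> omega
  · have := maxColor_lt (c := c) (candidates_union_nonempty (s := s) hx hN (by omega))
    rw [kneserLabel, if_neg hsx]
    split_ifs <;> omega

theorem isTuckerLabelling_kneserLabel (hc : KGProper 2 N n s C c) (hs : s < n)
    (hN : 2 * n ≤ N) : IsTuckerLabelling (kneserLabel c n s) :=
  ⟨fun _ hx => kneserLabel_ne_zero hs hx, fun _ hx => kneserLabel_neg hc hs hN hx,
    fun _ _ hx h => kneserLabel_ne_neg hc hs hN hx h⟩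

end Kneser

theorem KGProper.chromatic_lower_bound {N n s C : ℕ} {c : Finset (Fin N) → Fin C}
    (hc : KGProper 2 N n s C c) (hs : s < n) (hN : 2 * n ≤ N) : N + 2 * s + 2 ≤ C + 2 * n := by
  have := (Kneser.isTuckerLabelling_kneserLabel hc hs hN).le_of_natAbs_le fun _ hx =>
    Kneser.natAbs_kneserLabel_le hs hN hx
  omega

/-- `χ(KG^2(2n, n, s)) ≥ 2s + 2` for `n > s ≥ 0`. -/
theorem chromatic_lower_bound_kneser_half (n s : ℕ) (hs : s < n)
    (C : ℕ) (c : Finset (Fin (2 * n)) → Fin C) (hc : KGProper 2 (2 * n) n s C c) :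
    2 * s + 2 ≤ C := by
  have := hc.chromatic_lower_bound hs le_rfl
  omega
end
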